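/- Let β : V → W be a linear map of finite-dimensional real vector spaces and let τ ⊆ V be a polyhedral convex cone. Then the following are equivalent: (1) for every linear functional l : W → ℝ, if l ∘ β is nonnegative on τ, then l ∘ β vanishes on τ; (2) 0 lies in the relative interior of β(τ). -/

import Mathlib

/-- The polyhedral convex cone generated by a finite set `s`. -/
def coneOf {V : Type*} [AddCommGroup V] [Module ℝ V] (s : Finset V) : Set V :=
  {x | ∃ f : V → ℝ, (∀ v, 0 ≤ f v) ∧ x = ∑ v ∈ s, f v • v}

/-!
The image `C = β(τ)` is the cone generated by the finite set `β(s)`. Such a cone contains `0` in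
its relative interior exactly when it is a linear subspace, i.e. when `-x ∈ C` for all `x ∈ C`:
a neighbourhood of `0` in the span of `C` contains a negative multiple of every `x ∈ C`. If `C`
is a subspace, a functional that is nonnegative on `C` vanishes on it. Conversely, `C` is closed
(by Carathéodory's theorem for cones it is a finite union of cones on linearly independent
vectors, each the image of an orthant under a closed embedding), so a point `-x ∉ C` with
`x ∈ C` is separated from `C` by a functional that is nonpositive on `C` and positive at `-x`;
its negative is nonnegative on `C` without vanishing at `x`.
-/

open Set

section coneOf

variable {V : Type*} [AddCommGroup V] [Module ℝ V]

theorem mem_coneOf_iff {s : Finset V} {x : V} :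
    x ∈ coneOf s ↔ ∃ f : V → ℝ, (∀ v ∈ s, 0 ≤ f v) ∧ x = ∑ v ∈ s, f v • v := by
  refine ⟨fun ⟨f, hf, hx⟩ => ⟨f, fun v _ => hf v, hx⟩, fun ⟨f, hf, hx⟩ => ?_⟩
  refine ⟨fun v => max (f v) 0, fun v => le_max_right _ _, hx.trans ?_⟩
  exact Finset.sum_congr rfl fun v hv => by simp only [max_eq_left (hf v hv)]

theorem coe_hull_finset (s : Finset V) : (PointedCone.hull ℝ (s : Set V) : Set V) = coneOf s := by
  ext x
  constructor
  · intro hx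
    obtain ⟨f, -, rfl⟩ := Submodule.mem_span_finset.mp hx
    exact ⟨fun v => f v, fun v => (f v).2, by simp only [Nonneg.coe_smul]⟩
  · rintro ⟨f, hf, rfl⟩
    exact Submodule.sum_mem _ fun v hv =>
      PointedCone.smul_mem _ (hf v) (Submodule.subset_span hv)

theorem coneOf_mono {s t : Finset V} (hst : s ⊆ t) : coneOf s ⊆ coneOf t := by
  rw [← coe_hull_finset, ← coe_hull_finset]
  exact Submodule.span_mono (by exact_mod_cast hst)

theorem image_coneOf {W : Type*} [AddCommGroup W] [Module ℝ W] [DecidableEq W] (β : V →ₗ[ℝ] W)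
    (s : Finset V) : β '' coneOf s = coneOf (s.image β) := by
  rw [← coe_hull_finset, ← coe_hull_finset, ← PointedCone.coe_map, PointedCone.map,
    Submodule.map_span, Finset.coe_image]
  rfl

theorem mem_coneOf_erase_of_relation [DecidableEq V] {s : Finset V} {x : V} (hx : x ∈ coneOf s)
    {g : V → ℝ} (hg : ∑ v ∈ s, g v • v = 0) (hpos : ∃ v ∈ s, 0 < g v) :
    ∃ v ∈ s, x ∈ coneOf (s.erase v) := by
  obtain ⟨f, hf, rfl⟩ := hx
  obtain ⟨v₀, hv₀, hmin⟩ := (s.filter fun v => 0 < g v).exists_min_image (fun v => f v / g v)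
    (by simpa [Finset.filter_nonempty_iff] using hpos)
  rw [Finset.mem_filter] at hv₀
  -- the largest multiple of the relation that keeps all coefficients nonnegative
  set c := f v₀ / g v₀
  have hc : 0 ≤ c := div_nonneg (hf v₀) hv₀.2.le
  have hnonneg : ∀ v ∈ s, 0 ≤ f v - c * g v := by
    intro v hv
    rcases le_or_gt (g v) 0 with hgv | hgv
    · linarith [hf v, mul_nonpos_of_nonneg_of_nonpos hc hgv]
    · rw [sub_nonneg, ← le_div_iff₀ hgv]
      exact hmin v (Finset.mem_filter.mpr ⟨hv, hgv⟩)
  have hv₀zero : f v₀ - c * g v₀ = 0 := by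
    rw [div_mul_cancel₀ _ hv₀.2.ne', sub_self]
  refine ⟨v₀, hv₀.1, mem_coneOf_iff.mpr ⟨fun v => f v - c * g v,
    fun v hv => hnonneg v (Finset.mem_of_mem_erase hv), ?_⟩⟩
  rw [Finset.sum_erase _ (by simp only [hv₀zero, zero_smul])]
  simp only [sub_smul, mul_smul, Finset.sum_sub_distrib, ← Finset.smul_sum, hg, smul_zero,
    sub_zero]

theorem exists_relation_pos_of_not_linearIndepOn {s : Finset V}
    (hs : ¬LinearIndepOn ℝ id (s : Set V)) :
    ∃ g : V → ℝ, ∑ v ∈ s, g v • v = 0 ∧ ∃ v ∈ s, 0 < g v := by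
  simp only [linearIndepOn_finset_iff, id, not_forall] at hs
  obtain ⟨g, hg, v, hv, hgv⟩ := hs
  rcases lt_or_gt_of_ne hgv with hneg | hpos
  · refine ⟨-g, ?_, v, hv, neg_pos.mpr hneg⟩
    simp only [Pi.neg_apply, neg_smul, Finset.sum_neg_distrib, hg, neg_zero]
  · exact ⟨g, hg, v, hv, hpos⟩

theorem exists_linearIndepOn_mem_coneOf [DecidableEq V] {s : Finset V} {x : V}
    (hx : x ∈ coneOf s) : ∃ t ⊆ s, LinearIndepOn ℝ id (t : Set V) ∧ x ∈ coneOf t := by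
  induction s using Finset.strongInduction with
  | H s ih =>
    by_cases hs : LinearIndepOn ℝ id (s : Set V)
    · exact ⟨s, subset_rfl, hs, hx⟩
    obtain ⟨g, hg, hpos⟩ := exists_relation_pos_of_not_linearIndepOn hs
    obtain ⟨v, hv, hxv⟩ := mem_coneOf_erase_of_relation hx hg hpos
    obtain ⟨t, hts, ht, hxt⟩ := ih _ (Finset.erase_ssubset hv) hxv
    exact ⟨t, hts.trans (s.erase_subset v), ht, hxt⟩

theorem coneOf_eq_image_linearCombination (t : Finset V) :
    coneOf t = Fintype.linearCombination ℝ ((↑) : t → V) '' {c | 0 ≤ c} := by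
  ext x
  simp only [Fintype.linearCombination_apply, mem_image, mem_ofPred_eq, mem_coneOf_iff]
  constructor
  · rintro ⟨f, hf, rfl⟩
    exact ⟨fun v => f v, fun v => hf v v.2, Finset.sum_coe_sort t fun v => f v • v⟩
  · rintro ⟨c, hc, rfl⟩
    classical
    refine ⟨fun v => if hv : v ∈ t then c ⟨v, hv⟩ else 0,
      fun v hv => by simpa [hv] using hc ⟨v, hv⟩, ?_⟩
    rw [← Finset.sum_coe_sort t]
    simp

end coneOf

section Topology

variable {E : Type*} [AddCommGroup E] [Module ℝ E] [TopologicalSpace E] [IsTopologicalAddGroup E]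
  [ContinuousSMul ℝ E] [T2Space E]

theorem isClosed_coneOf_of_linearIndepOn {t : Finset E}
    (ht : LinearIndepOn ℝ id (t : Set E)) : IsClosed (coneOf t) := by
  rw [coneOf_eq_image_linearCombination]
  exact (LinearMap.isClosedEmbedding_of_injective
    (LinearMap.ker_eq_bot.mpr ht.fintypeLinearCombination_injective)).isClosedMap _ isClosed_Ici

theorem isClosed_coneOf (s : Finset E) : IsClosed (coneOf s) := by
  classical
  have hunion : coneOf s =
      ⋃ (t : Finset E) (_ : t ∈ s.powerset.filter fun t : Finset E =>
        LinearIndepOn ℝ id (t : Set E)), coneOf t := by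
    refine subset_antisymm (fun x hx => ?_) (iUnion₂_subset fun t ht => ?_)
    · obtain ⟨t, hts, ht, hxt⟩ := exists_linearIndepOn_mem_coneOf hx
      exact mem_biUnion (Finset.mem_filter.mpr ⟨Finset.mem_powerset.mpr hts, ht⟩) hxt
    · exact coneOf_mono (Finset.mem_powerset.mp (Finset.mem_filter.mp ht).1)
  rw [hunion]
  exact isClosed_biUnion_finset fun t ht =>
    isClosed_coneOf_of_linearIndepOn (Finset.mem_filter.mp ht).2

end Topology

namespace PointedCone

section Separation

variable {E : Type*} [TopologicalSpace E] [AddCommGroup E] [Module ℝ E] [IsTopologicalAddGroup E]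
  [ContinuousSMul ℝ E] [LocallyConvexSpace ℝ E]

theorem neg_mem_of_forall_nonneg_imp_eq_zero {C : PointedCone ℝ E} (hC : IsClosed (C : Set E))
    (h : ∀ f : E →L[ℝ] ℝ, (∀ x ∈ C, 0 ≤ f x) → ∀ x ∈ C, f x = 0) {x : E} (hx : x ∈ C) :
    -x ∈ C := by
  by_contra hnx
  obtain ⟨f, u, hfC, hfx⟩ := geometric_hahn_banach_closed_point C.convex hC hnx
  have hu : 0 < u := by simpa using hfC 0 C.zero_mem
  have hf : ∀ y ∈ C, f y ≤ 0 := by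
    intro y hy
    by_contra! hfy
    have := hfC _ (C.smul_mem (div_pos hu hfy).le hy)
    rw [map_smul, smul_eq_mul, div_mul_cancel₀ _ hfy.ne'] at this
    exact this.false
  have hfx0 : f x = 0 := by simpa using h (-f) (fun y hy => by simpa using hf y hy) x hx
  rw [map_neg, hfx0, neg_zero] at hfx
  exact hu.not_gt hfx

end Separation

section IntrinsicInterior

variable {E : Type*} [AddCommGroup E] [Module ℝ E] [TopologicalSpace E]

theorem _root_.intrinsicInterior_coe_affineSubspace (Q : AffineSubspace ℝ E) :
    intrinsicInterior ℝ (Q : Set E) = Q := by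
  have huniv : ((↑) ⁻¹' (Q : Set E) : Set (affineSpan ℝ (Q : Set E))) = univ :=
    eq_univ_of_forall fun p => (SetLike.ext_iff.mp Q.affineSpan_coe (p : E)).mp p.2
  rw [intrinsicInterior, huniv, interior_univ, image_univ, Subtype.range_coe,
    AffineSubspace.affineSpan_coe]

theorem zero_mem_intrinsicInterior_iff [IsTopologicalAddGroup E] [ContinuousSMul ℝ E]
    {C : PointedCone ℝ E} : (0 : E) ∈ intrinsicInterior ℝ (C : Set E) ↔ ∀ x ∈ C, -x ∈ C := by
  refine ⟨fun h x hx => ?_, fun hC => ?_⟩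
  · obtain ⟨y, hy, hy0⟩ := mem_intrinsicInterior.mp h
    have hline : ∀ t : ℝ, t • x ∈ affineSpan ℝ (C : Set E) := fun t => by
      simpa [AffineMap.lineMap_apply_module] using
        AffineMap.lineMap_mem t (subset_affineSpan ℝ _ C.zero_mem) (subset_affineSpan ℝ _ hx)
    let m : ℝ → affineSpan ℝ (C : Set E) := fun t => ⟨t • x, hline t⟩
    have hm : Continuous m := (continuous_id.smul continuous_const).subtype_mk _
    have hm0 : m 0 = y := Subtype.ext (by simp [m, hy0])
    have hev : ∀ᶠ t in nhdsWithin (0 : ℝ) (Iio 0), m t ∈ interior ((↑) ⁻¹' (C : Set E)) :=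
      nhdsWithin_le_nhds (hm.tendsto 0 (hm0 ▸ isOpen_interior.mem_nhds hy))
    obtain ⟨t, htC, ht⟩ := (hev.and self_mem_nhdsWithin).exists
    have htx : t • x ∈ C := (interior_subset htC : m t ∈ (↑) ⁻¹' (C : Set E))
    have hneg : -x = (-t)⁻¹ • (t • x) := by
      rw [smul_smul, inv_neg, neg_mul, inv_mul_cancel₀ (ne_of_lt ht), neg_smul, one_smul]
    exact hneg ▸ C.smul_mem (inv_nonneg.mpr (neg_nonneg.mpr (le_of_lt ht))) htx
  · have hCL : (C : Set E) = C.lineal := by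
      ext x
      exact ⟨fun hx => ⟨hx, hC x hx⟩, fun hx => hx.1⟩
    rw [hCL, show (C.lineal : Set E) = C.lineal.toAffineSubspace from rfl,
      intrinsicInterior_coe_affineSubspace]
    exact C.lineal.zero_mem

end IntrinsicInterior

end PointedCone

theorem forall_pullback_nonneg_vanishes_iff_zero_mem_relint_image_general
    (V W : Type*) [NormedAddCommGroup V] [NormedSpace ℝ V]
    [NormedAddCommGroup W] [NormedSpace ℝ W]
    (β : V →ₗ[ℝ] W) (s : Finset V) (τ : Set V) (hτ : τ = coneOf s) :
    (∀ l : W →ₗ[ℝ] ℝ, (∀ x ∈ τ, 0 ≤ l (β x)) → ∀ x ∈ τ, l (β x) = 0) ↔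
      (0 : W) ∈ intrinsicInterior ℝ (β '' τ) := by
  classical
  subst hτ
  set C : PointedCone ℝ W := PointedCone.hull ℝ (s.image β : Set W)
  have hC : (C : Set W) = β '' coneOf s := by rw [image_coneOf, coe_hull_finset]
  have hCclosed : IsClosed (C : Set W) := by rw [coe_hull_finset]; exact isClosed_coneOf _
  have hmem : ∀ {y}, y ∈ C ↔ y ∈ β '' coneOf s := Set.ext_iff.mp hC _
  rw [← hC, PointedCone.zero_mem_intrinsicInterior_iff]
  constructor
  · intro h y hy
    refine PointedCone.neg_mem_of_forall_nonneg_imp_eq_zero hCclosed (fun f hf z hz => ?_) hy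
    obtain ⟨x, hx, rfl⟩ := hmem.mp hz
    exact h f (fun x hx => hf _ (hmem.mpr (mem_image_of_mem β hx))) x hx
  · intro h l hl x hx
    obtain ⟨z, hz, hβz⟩ := hmem.mp (h _ (hmem.mpr (mem_image_of_mem β hx)))
    have hlz := hl z hz
    rw [hβz, map_neg, neg_nonneg] at hlz
    exact le_antisymm hlz (hl x hx)

/-- For a linear map `β : V → W` and a polyhedral convex cone `τ ⊆ V`,
the following are equivalent: (1) every functional `l` on `W` with `l ∘ β`
nonnegative on `τ` has `l ∘ β` vanishing on `τ`; (2) `0` is in the relative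
interior of `β(τ)`. -/
theorem forall_pullback_nonneg_vanishes_iff_zero_mem_relint_image
    (V W : Type*) [NormedAddCommGroup V] [NormedSpace ℝ V] [FiniteDimensional ℝ V]
    [NormedAddCommGroup W] [NormedSpace ℝ W] [FiniteDimensional ℝ W]
    (β : V →ₗ[ℝ] W) (s : Finset V) (τ : Set V) (hτ : τ = coneOf s) :
    (∀ l : W →ₗ[ℝ] ℝ, (∀ x ∈ τ, 0 ≤ l (β x)) → ∀ x ∈ τ, l (β x) = 0) ↔
      (0 : W) ∈ intrinsicInterior ℝ (β '' τ) :=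
  forall_pullback_nonneg_vanishes_iff_zero_mem_relint_image_general V W β s τ hτ
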